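/- Let R be a commutative ring and M a finitely generated R-module. For any proper submodule N of M, the radical √N of N is the smallest semiprime submodule of M containing N: √N is semiprime, contains N, and is contained in every semiprime submodule of M that contains N. -/
import Mathlib


/-- The ideal `(N : m) = {r : R | r • m ∈ N}` attached to a submodule `N` and `m ∈ M`. -/
def pointColon {R M : Type*} [CommRing R] [AddCommGroup M] [Module R M]
    (N : Submodule R M) (m : M) : Ideal R :=
  N.comap (LinearMap.toSpanSingleton R M m)

/-- A submodule `N` of `M` is semiprime if for every `m ∈ M`,
`m ∈ (N : m) • M` implies `m ∈ N`. -/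
def IsSemiprimeSub {R M : Type*} [CommRing R] [AddCommGroup M] [Module R M]
    (N : Submodule R M) : Prop :=
  ∀ m : M, m ∈ pointColon N m • (⊤ : Submodule R M) → m ∈ N

/-- A submodule `P` of `M` is prime if `P ≠ M` and `r • m ∈ P` implies
`m ∈ P` or `r • M ⊆ P`. -/
def IsPrimeSub {R M : Type*} [CommRing R] [AddCommGroup M] [Module R M]
    (P : Submodule R M) : Prop :=
  P ≠ ⊤ ∧ ∀ (r : R) (m : M), r • m ∈ P → m ∈ P ∨ ∀ x : M, r • x ∈ P

/-- The first radical `N^(1)` of `N`: the submodule generated by all `m`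
with `m ∈ (N : m) • M`. -/
def firstRadical {R M : Type*} [CommRing R] [AddCommGroup M] [Module R M]
    (N : Submodule R M) : Submodule R M :=
  Submodule.span R {m : M | m ∈ pointColon N m • (⊤ : Submodule R M)}

section Aux

variable {R M : Type*} [CommRing R] [AddCommGroup M] [Module R M]

lemma mem_pointColon {N : Submodule R M} {x : M} {r : R} :
    r ∈ pointColon N x ↔ r • x ∈ N := by
  simp [pointColon]

lemma semiprime_sup_absorb {K : Submodule R M} (hK : IsSemiprimeSub K) {y : M}
    (hy : y ∈ K ⊔ pointColon K y • (⊤ : Submodule R M)) : y ∈ K := by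
  rcases Submodule.mem_sup.1 hy with ⟨k, hk, w, hw, rfl⟩
  have hcol : pointColon K (k + w) = pointColon K w := by
    ext r
    simp only [mem_pointColon, smul_add]
    constructor
    · intro h
      have := K.sub_mem h (K.smul_mem r hk)
      simpa using this
    · intro h
      exact K.add_mem (K.smul_mem r hk) h
  have hw' : w ∈ pointColon K w • (⊤ : Submodule R M) := by rwa [hcol] at hw
  exact K.add_mem hk (hK w hw')

/-- iterate `J ↦ J ⊔ Φ J` starting from `A` -/
def phiIter (Φ : Ideal R → Ideal R) (A : Ideal R) : ℕ → Ideal R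
  | 0 => A
  | n + 1 => phiIter Φ A n ⊔ Φ (phiIter Φ A n)

lemma phiIter_mono (Φ : Ideal R → Ideal R) (A : Ideal R) : Monotone (phiIter Φ A) :=
  monotone_nat_of_le_succ fun _ => le_sup_left

end Aux

section Sep

variable {R M : Type*} [CommRing R] [AddCommGroup M] [Module R M]

lemma exists_prime_sep (K : Submodule R M) (hK : IsSemiprimeSub K) {m : M} (hm : m ∉ K) :
    ∃ P : Submodule R M, IsPrimeSub P ∧ K ≤ P ∧ m ∉ P := by
  classical
  set Φ : Ideal R → Ideal R := fun I => pointColon (K ⊔ I • (⊤ : Submodule R M)) m with hΦdef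
  have hΦ_mem : ∀ (I : Ideal R) (t : R),
      t ∈ Φ I ↔ t • m ∈ K ⊔ I • (⊤ : Submodule R M) := fun I t => mem_pointColon
  -- directed sups pass through `K ⊔ · • ⊤`
  have hdir : ∀ (s : Set (Ideal R)), s.Nonempty → DirectedOn (· ≤ ·) s →
      ∀ z : M, z ∈ K ⊔ (sSup s) • (⊤ : Submodule R M) →
        ∃ I ∈ s, z ∈ K ⊔ I • (⊤ : Submodule R M) := by
    intro s hne hdir z hz
    have hle : K ⊔ (sSup s) • (⊤ : Submodule R M) ≤
        sSup ((fun I : Ideal R => K ⊔ I • (⊤ : Submodule R M)) '' s) := by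
      apply sup_le
      · obtain ⟨I₀, hI₀⟩ := hne
        exact le_trans (le_sup_left : K ≤ K ⊔ I₀ • ⊤) (le_sSup ⟨I₀, hI₀, rfl⟩)
      · rw [Submodule.smul_le]
        intro r hr n _
        obtain ⟨I, hIs, hrI⟩ := (Submodule.mem_sSup_of_directed hne hdir).1 hr
        have hmem : (K ⊔ I • (⊤ : Submodule R M)) ∈
            (fun I : Ideal R => K ⊔ I • (⊤ : Submodule R M)) '' s := ⟨I, hIs, rfl⟩
        exact le_sSup hmem
          (Submodule.mem_sup_right (Submodule.smul_mem_smul hrI Submodule.mem_top))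
    have hdir' : DirectedOn (· ≤ ·) ((fun I : Ideal R => K ⊔ I • (⊤ : Submodule R M)) '' s) := by
      rintro _ ⟨I, hI, rfl⟩ _ ⟨J, hJ, rfl⟩
      obtain ⟨L, hL, hIL, hJL⟩ := hdir I hI J hJ
      exact ⟨_, ⟨L, hL, rfl⟩, sup_le_sup_left (Submodule.smul_mono_left hIL) K,
        sup_le_sup_left (Submodule.smul_mono_left hJL) K⟩
    obtain ⟨_, ⟨I, hIs, rfl⟩, hzI⟩ :=
      (Submodule.mem_sSup_of_directed (hne.image _) hdir').1 (hle hz)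
    exact ⟨I, hIs, hzI⟩
  -- the seed is a prefixed point
  have hJ0 : Φ (pointColon K m) ≤ pointColon K m := by
    intro t ht
    rw [hΦ_mem] at ht
    have hsub : pointColon K m ≤ pointColon K (t • m) := by
      intro a ha
      rw [mem_pointColon] at ha ⊢
      rw [smul_comm]
      exact K.smul_mem t ha
    rw [mem_pointColon]
    exact semiprime_sup_absorb hK
      ((sup_le_sup_left (Submodule.smul_mono_left hsub) K) ht)
  set F : Set (Ideal R) := {I | pointColon K m ≤ I ∧ Φ I ≤ I ∧ (1 : R) ∉ I} with hFdef
  have hmF : pointColon K m ∈ F :=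
    ⟨le_rfl, hJ0, fun h => hm (by simpa using mem_pointColon.1 h)⟩
  obtain ⟨p, hple, hpmax⟩ := zorn_le_nonempty₀ F (by
    intro c hcF hchain y hyc
    refine ⟨sSup c, ⟨le_trans (hcF hyc).1 (le_sSup hyc), ?_, ?_⟩, fun z hz => le_sSup hz⟩
    · intro t ht
      rw [hΦ_mem] at ht
      obtain ⟨I, hIc, htI⟩ := hdir c ⟨y, hyc⟩ hchain.directedOn (t • m) ht
      exact (le_trans (hcF hIc).2.1 (le_sSup hIc)) ((hΦ_mem I t).2 htI)
    · intro h1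
      obtain ⟨I, hIc, h1I⟩ := (Submodule.mem_sSup_of_directed ⟨y, hyc⟩ hchain.directedOn).1 h1
      exact (hcF hIc).2.2 h1I) (pointColon K m) hmF
  have hpF : p ∈ F := hpmax.1
  have h1p : (1 : R) ∉ p := hpF.2.2
  have hΦp : Φ p ≤ p := hpF.2.1
  -- iteration closures
  have hclosure : ∀ A : Ideal R, Φ (⨆ n, phiIter Φ A n) ≤ ⨆ n, phiIter Φ A n := by
    intro A t ht
    rw [hΦ_mem] at ht
    rw [show (⨆ n, phiIter Φ A n) = sSup (Set.range (phiIter Φ A)) from (sSup_range).symm] at ht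
    obtain ⟨_, ⟨n, rfl⟩, htn⟩ := hdir (Set.range (phiIter Φ A)) ⟨A, 0, rfl⟩
      ((phiIter_mono Φ A).directed_le.directedOn_range) (t • m) ht
    exact le_iSup (phiIter Φ A) (n + 1) (Submodule.mem_sup_right ((hΦ_mem _ t).2 htn))
  -- maximality ⇒ for x ∉ p the closure of p ⊔ (x) hits 1
  have hone : ∀ x : R, x ∉ p → ∃ n, (1 : R) ∈ phiIter Φ (p ⊔ Ideal.span {x}) n := by
    intro x hx
    by_contra hno
    push_neg at hno
    set A : Ideal R := p ⊔ Ideal.span {x} with hAdef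
    have hA0 : phiIter Φ A 0 = A := rfl
    have hsupF : (⨆ n, phiIter Φ A n) ∈ F := by
      refine ⟨le_trans (le_trans hple le_sup_left) (hA0 ▸ le_iSup (phiIter Φ A) 0), hclosure A, ?_⟩
      intro h1
      obtain ⟨n, h1n⟩ := (Submodule.mem_iSup_of_directed _ (phiIter_mono Φ A).directed_le).1 h1
      exact hno n h1n
    have hplesup : p ≤ ⨆ n, phiIter Φ A n :=
      le_trans (le_sup_left : p ≤ A) (hA0 ▸ le_iSup (phiIter Φ A) 0)
    have := hpmax.2 hsupF hplesup
    exact hx (this (hA0 ▸ le_iSup (phiIter Φ A) 0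
      (Submodule.mem_sup_right (Ideal.subset_span rfl))))
  -- p is prime
  have hpprime : ∀ a b : R, a * b ∈ p → a ∈ p ∨ b ∈ p := by
    intro a b hab
    by_contra hcon
    push_neg at hcon
    obtain ⟨ha, hb⟩ := hcon
    have hstepA : ∀ (A B : Ideal R), (∀ x ∈ A, ∀ y ∈ B, x * y ∈ p) →
        ∀ x ∈ A ⊔ Φ A, ∀ y ∈ B, x * y ∈ p := by
      intro A B hAB x hx y hy
      rcases Submodule.mem_sup.1 hx with ⟨x₁, hx₁, x₂, hx₂, rfl⟩
      have h1 : x₁ * y ∈ p := hAB x₁ hx₁ y hy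
      have h2 : x₂ * y ∈ p := by
        have hx₂m : x₂ • m ∈ K ⊔ A • (⊤ : Submodule R M) := (hΦ_mem A x₂).1 hx₂
        have hmem : (x₂ * y) • m ∈ K ⊔ p • (⊤ : Submodule R M) := by
          have heq : (x₂ * y) • m = y • (x₂ • m) := by rw [mul_comm, mul_smul]
          rw [heq]
          rcases Submodule.mem_sup.1 hx₂m with ⟨k, hk, w, hw, hkw⟩
          rw [← hkw, smul_add]
          refine Submodule.add_mem _ (Submodule.mem_sup_left (K.smul_mem y hk)) ?_
          refine Submodule.mem_sup_right ?_
          refine Submodule.smul_induction_on hw (fun r hr n _ => ?_) (fun u v hu hv => ?_)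
          · rw [smul_smul, mul_comm]
            exact Submodule.smul_mem_smul (hAB r hr y hy) Submodule.mem_top
          · rw [smul_add]
            exact Submodule.add_mem _ hu hv
        exact hΦp ((hΦ_mem p (x₂ * y)).2 hmem)
      rw [add_mul]
      exact Ideal.add_mem _ h1 h2
    have hstepB : ∀ (A B : Ideal R), (∀ x ∈ A, ∀ y ∈ B, x * y ∈ p) →
        ∀ x ∈ A, ∀ y ∈ B ⊔ Φ B, x * y ∈ p := by
      intro A B hAB x hx y hy
      rcases Submodule.mem_sup.1 hy with ⟨y₁, hy₁, y₂, hy₂, rfl⟩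
      have h1 : x * y₁ ∈ p := hAB x hx y₁ hy₁
      have h2 : x * y₂ ∈ p := by
        have hy₂m : y₂ • m ∈ K ⊔ B • (⊤ : Submodule R M) := (hΦ_mem B y₂).1 hy₂
        have hmem : (x * y₂) • m ∈ K ⊔ p • (⊤ : Submodule R M) := by
          have heq : (x * y₂) • m = x • (y₂ • m) := by rw [mul_smul]
          rw [heq]
          rcases Submodule.mem_sup.1 hy₂m with ⟨k, hk, w, hw, hkw⟩
          rw [← hkw, smul_add]
          refine Submodule.add_mem _ (Submodule.mem_sup_left (K.smul_mem x hk)) ?_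
          refine Submodule.mem_sup_right ?_
          refine Submodule.smul_induction_on hw (fun r hr n _ => ?_) (fun u v hu hv => ?_)
          · rw [smul_smul]
            exact Submodule.smul_mem_smul (hAB x hx r hr) Submodule.mem_top
          · rw [smul_add]
            exact Submodule.add_mem _ hu hv
        exact hΦp ((hΦ_mem p (x * y₂)).2 hmem)
      rw [mul_add]
      exact Ideal.add_mem _ h1 h2
    have base : ∀ x ∈ p ⊔ Ideal.span {a}, ∀ y ∈ p ⊔ Ideal.span {b}, x * y ∈ p := by
      intro x hx y hy
      rcases Submodule.mem_sup.1 hx with ⟨u, hu, v, hv, rfl⟩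
      rcases Submodule.mem_sup.1 hy with ⟨u', hu', v', hv', rfl⟩
      rcases Ideal.mem_span_singleton'.1 hv with ⟨c, rfl⟩
      rcases Ideal.mem_span_singleton'.1 hv' with ⟨d, rfl⟩
      have heq : (u + c * a) * (u' + d * b) =
          u * (u' + d * b) + (c * a) * u' + (c * d) * (a * b) := by ring
      rw [heq]
      exact Ideal.add_mem _ (Ideal.add_mem _ (Ideal.mul_mem_right _ _ hu)
        (Ideal.mul_mem_left _ _ hu')) (Ideal.mul_mem_left _ _ hab)
    have key : ∀ n k, ∀ x ∈ phiIter Φ (p ⊔ Ideal.span {a}) n,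
        ∀ y ∈ phiIter Φ (p ⊔ Ideal.span {b}) k, x * y ∈ p := by
      intro n
      induction n with
      | zero =>
        intro k
        induction k with
        | zero => exact base
        | succ k ih => exact hstepB _ _ ih
      | succ n ihn =>
        intro k
        exact hstepA _ _ (ihn k)
    obtain ⟨n, h1a⟩ := hone a ha
    obtain ⟨k, h1b⟩ := hone b hb
    exact h1p (by simpa using key n k 1 h1a 1 h1b)
  -- the saturation of `K ⊔ p•⊤` at `p`
  refine ⟨{ carrier := {x : M | ∃ s : R, s ∉ p ∧ s • x ∈ K ⊔ p • (⊤ : Submodule R M)}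
          , add_mem' := ?_
          , zero_mem' := ⟨1, h1p, by simp⟩
          , smul_mem' := ?_ }, ⟨?_, ?_⟩, ?_, ?_⟩
  · rintro x y ⟨s, hs, hsx⟩ ⟨t, ht, hty⟩
    refine ⟨s * t, fun h => (hpprime s t h).elim hs ht, ?_⟩
    have heq : (s * t) • (x + y) = t • (s • x) + s • (t • y) := by
      rw [smul_add]
      congr 1
      · rw [smul_smul, mul_comm]
      · rw [smul_smul]
    rw [heq]
    exact Submodule.add_mem _ (Submodule.smul_mem _ t hsx) (Submodule.smul_mem _ s hty)
  · rintro r x ⟨s, hs, hsx⟩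
    exact ⟨s, hs, by rw [smul_comm]; exact Submodule.smul_mem _ r hsx⟩
  · -- P ≠ ⊤
    intro htop
    have : m ∈ ({x : M | ∃ s : R, s ∉ p ∧ s • x ∈ K ⊔ p • (⊤ : Submodule R M)} : Set M) := by
      have := htop ▸ (Submodule.mem_top : m ∈ (⊤ : Submodule R M))
      exact this
    obtain ⟨s, hs, hsm⟩ := this
    exact hs (hΦp ((hΦ_mem p s).2 hsm))
  · -- primality
    intro r x hrx
    by_cases hr : r ∈ p
    · right
      intro z
      exact ⟨1, h1p, by
        rw [one_smul]
        exact Submodule.mem_sup_right (Submodule.smul_mem_smul hr Submodule.mem_top)⟩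
    · left
      obtain ⟨s, hs, hsrx⟩ := hrx
      exact ⟨s * r, fun h => (hpprime s r h).elim hs hr, by rw [mul_smul]; exact hsrx⟩
  · -- K ≤ P
    intro x hx
    exact ⟨1, h1p, by rw [one_smul]; exact Submodule.mem_sup_left hx⟩
  · -- m ∉ P
    rintro ⟨s, hs, hsm⟩
    exact hs (hΦp ((hΦ_mem p s).2 hsm))

end Sep


theorem radical_is_smallest_semiprime {R M : Type*} [CommRing R] [AddCommGroup M]
    [Module R M] [Module.Finite R M] (N : Submodule R M) (hN : N ≠ ⊤) :
    IsSemiprimeSub (sInf {P : Submodule R M | IsPrimeSub P ∧ N ≤ P}) ∧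
      N ≤ sInf {P : Submodule R M | IsPrimeSub P ∧ N ≤ P} ∧
      ∀ K : Submodule R M, IsSemiprimeSub K → N ≤ K →
        sInf {P : Submodule R M | IsPrimeSub P ∧ N ≤ P} ≤ K := by
  refine ⟨?_, le_sInf fun P hP => hP.2, ?_⟩
  · intro y hy
    rw [Submodule.mem_sInf]
    intro P hP
    by_cases hyP : y ∈ P
    · exact hyP
    have hle : pointColon (sInf {P : Submodule R M | IsPrimeSub P ∧ N ≤ P}) y
        • (⊤ : Submodule R M) ≤ P := by
      rw [Submodule.smul_le]
      intro r hr x _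
      have hry : r • y ∈ P := (sInf_le hP) (mem_pointColon.1 hr)
      rcases hP.1.2 r y hry with h | h
      · exact absurd h hyP
      · exact h x
    exact absurd (hle hy) hyP
  · intro K hK hNK x hx
    by_contra hxK
    obtain ⟨P, hP, hKP, hxP⟩ := exists_prime_sep K hK hxK
    exact hxP (Submodule.mem_sInf.1 hx P ⟨hP, le_trans hNK hKP⟩)
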